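/- Let D0 be a positive natural number, let η be a nonzero real number, and let Π1, Π2 be invertible D0×D0 real matrices. Define the 2D0×2D0 real block matrix Δ := fromBlocks A B C D with blocks A = −η·(Π1 + (I − η·Π1ᵀ)·Π2·(I − η·Π1ᵀ)), B = −η·(Π1 + (I − η·Π1ᵀ)·Π2), C = η²·Π1ᵀ·Π2·(I − η·Π1ᵀ), and D = η²·Π1ᵀ·Π2, where I is the D0×D0 identity matrix. Then rank(Δ) ≥ D0. -/
import Mathlib


open Matrix

/-- Theorem 1 of the paper: the change `Δθ⁽¹⁾` of the middle weight after two SGD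
steps, written as a block matrix, has rank at least `D0`.  Here `P1`, `P2` are the
(invertible) matrices `Π₁`, `Π₂` of the paper and `η` is the (nonzero) learning rate. -/
theorem stmt_0 (D0 : ℕ) (hD0 : 0 < D0) (η : ℝ) (hη : η ≠ 0)
    (P1 P2 : Matrix (Fin D0) (Fin D0) ℝ) (hP1 : IsUnit P1) (hP2 : IsUnit P2) :
    D0 ≤ (Matrix.fromBlocks
      (-η • (P1 + (1 - η • P1ᵀ) * P2 * (1 - η • P1ᵀ)))
      (-η • (P1 + (1 - η • P1ᵀ) * P2))
      ((η ^ 2) • (P1ᵀ * P2 * (1 - η • P1ᵀ)))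
      ((η ^ 2) • (P1ᵀ * P2))).rank := by
  set Δ : Matrix (Fin D0 ⊕ Fin D0) (Fin D0 ⊕ Fin D0) ℝ :=
    Matrix.fromBlocks
      (-η • (P1 + (1 - η • P1ᵀ) * P2 * (1 - η • P1ᵀ)))
      (-η • (P1 + (1 - η • P1ᵀ) * P2))
      ((η ^ 2) • (P1ᵀ * P2 * (1 - η • P1ᵀ)))
      ((η ^ 2) • (P1ᵀ * P2)) with hΔ
  -- the bottom-right block is invertible
  have hDblk : IsUnit ((η ^ 2) • (P1ᵀ * P2)) := by
    have h1 : ((η ^ 2) • (P1ᵀ * P2)) = ((η ^ 2) • (1 : Matrix (Fin D0) (Fin D0) ℝ)) * (P1ᵀ * P2) := by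
      rw [smul_mul_assoc, one_mul]
    rw [h1]
    refine (IsUnit.mul ?_ (IsUnit.mul ?_ hP2))
    · rw [Matrix.isUnit_iff_isUnit_det]
      simp [Matrix.det_smul, isUnit_iff_ne_zero, pow_ne_zero, hη]
    · rw [Matrix.isUnit_iff_isUnit_det, Matrix.det_transpose,
        ← Matrix.isUnit_iff_isUnit_det]
      exact hP1
  have hsub : Δ.submatrix Sum.inr Sum.inr = (η ^ 2) • (P1ᵀ * P2) := by
    ext i j
    simp [hΔ]
  have hrankD : ((η ^ 2) • (P1ᵀ * P2)).rank = D0 := by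
    rw [Matrix.rank_of_isUnit _ hDblk, Fintype.card_fin]
  -- write the submatrix as a product
  have hprod : Δ.submatrix Sum.inr Sum.inr
      = ((1 : Matrix (Fin D0 ⊕ Fin D0) (Fin D0 ⊕ Fin D0) ℝ).submatrix Sum.inr (Equiv.refl _))
        * Δ * ((1 : Matrix (Fin D0 ⊕ Fin D0) (Fin D0 ⊕ Fin D0) ℝ).submatrix (Equiv.refl _) Sum.inr) := by
    rw [Matrix.one_submatrix_mul, Matrix.mul_submatrix_one]
    simp
  calc D0 = ((η ^ 2) • (P1ᵀ * P2)).rank := hrankD.symm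
    _ = (Δ.submatrix Sum.inr Sum.inr).rank := by rw [hsub]
    _ ≤ _ := by
        rw [hprod]
        exact le_trans (Matrix.rank_mul_le_left _ _) (Matrix.rank_mul_le_right _ _)
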